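/- Let γ = 1 or γ = 3/2, let D_φ, D_c, w, Δt > 0, let m_x, m_y ≥ 2, Δx, Δy > 0, set h = min(Δx, Δy) and s = 1/Δx² + 1/Δy², let M_N be the Neumann Kronecker-sum Laplacian of sizes (m_x, m_y) and steps (Δx, Δy), and let N be a real matrix of the same size with ‖N‖₁ ≤ 4·s and ‖N‖_∞ ≤ 4·s. Assume Δt·D_φ·s < γ + w·Δt and Δt·D_c·s < γ. If either h² > 10·D_φ/w or Δt < γ·h²/(10·D_φ − w·h²), and furthermore Δt < γ·h²/(10·D_c), then the spectral radii of the two iteration matrices Δt·D_φ·((γ + w·Δt)·I − Δt·D_φ·M_N)⁻¹·N and Δt·D_c·(γ·I − Δt·D_c·M_N)⁻¹·N are both strictly less than 1. -/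

import Mathlib

open Matrix Kronecker

noncomputable def dirLap (m : ℕ) (Δ : ℝ) : Matrix (Fin m) (Fin m) ℝ :=
  Matrix.of fun i j =>
    if i = j then -2 / Δ ^ 2
    else if (i : ℕ) + 1 = (j : ℕ) ∨ (j : ℕ) + 1 = (i : ℕ) then 1 / Δ ^ 2
    else 0

noncomputable def neuLap (m : ℕ) (Δ : ℝ) : Matrix (Fin m) (Fin m) ℝ :=
  Matrix.of fun i j =>
    if i = j then -2 / Δ ^ 2
    else if ((i : ℕ) = 0 ∧ (j : ℕ) = 1) ∨ ((i : ℕ) = m - 1 ∧ (j : ℕ) = m - 2) then 2 / Δ ^ 2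
    else if (i : ℕ) + 1 = (j : ℕ) ∨ (j : ℕ) + 1 = (i : ℕ) then 1 / Δ ^ 2
    else 0

noncomputable def kronLapD (mx my : ℕ) (Δx Δy : ℝ) :
    Matrix (Fin my × Fin mx) (Fin my × Fin mx) ℝ :=
  (1 : Matrix (Fin my) (Fin my) ℝ) ⊗ₖ dirLap mx Δx +
    dirLap my Δy ⊗ₖ (1 : Matrix (Fin mx) (Fin mx) ℝ)

noncomputable def kronLapN (mx my : ℕ) (Δx Δy : ℝ) :
    Matrix (Fin my × Fin mx) (Fin my × Fin mx) ℝ :=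
  (1 : Matrix (Fin my) (Fin my) ℝ) ⊗ₖ neuLap mx Δx +
    neuLap my Δy ⊗ₖ (1 : Matrix (Fin mx) (Fin mx) ℝ)

noncomputable def specRad {n : Type*} [Fintype n] [DecidableEq n] (A : Matrix n n ℝ) : ℝ :=
  sSup ((fun z : ℂ => ‖z‖) '' spectrum ℂ (A.map Complex.ofReal))

noncomputable def specRadC {n : Type*} [Fintype n] [DecidableEq n] (A : Matrix n n ℂ) : ℝ :=
  sSup ((fun z : ℂ => ‖z‖) '' spectrum ℂ A)

noncomputable def norm1 {n : Type*} [Fintype n] (A : Matrix n n ℝ) : ℝ :=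
  ⨆ j, ∑ i, |A i j|

noncomputable def normInf {n : Type*} [Fintype n] (A : Matrix n n ℝ) : ℝ :=
  ⨆ i, ∑ j, |A i j|

noncomputable def norm2 {n : Type*} [Fintype n] [DecidableEq n] (A : Matrix n n ℝ) : ℝ :=
  ‖Matrix.toEuclideanCLM (𝕜 := ℝ) A‖

/-!
Let `B = α • 1 - c • M` with `M = kronLapN …`. The one-dimensional Neumann Laplacians, hence
their Kronecker sum `M`, have nonnegative off-diagonal entries and nonpositive row sums, so
`B` is diagonally dominant with margin `α`: `‖B i i‖ ≥ ∑ j ≠ i, ‖B i j‖ + α`. If `μ` is an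
eigenvalue of `c • (B⁻¹ * N)`, then `μ • B - c • N` is singular, so by the Levy–Desplanques
theorem it is not strictly diagonally dominant, which forces `‖μ‖ * α ≤ c * ‖N‖_∞ ≤ 4 * c * s`.
Finally `s ≤ 2 / h ^ 2`, and the time-step conditions amount to `10 * c < α * h ^ 2`, so
`4 * c * s ≤ 8 * c / h ^ 2 < α`.
-/

namespace Matrix

variable {n : Type*} [Fintype n] [DecidableEq n]

def DiagDominantBy {K : Type*} [Norm K] (B : Matrix n n K) (α : ℝ) : Prop :=
  ∀ i, ∑ j ∈ Finset.univ.erase i, ‖B i j‖ + α ≤ ‖B i i‖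

theorem norm_mul_le_of_mem_spectrum_of_mul_eq {K : Type*} [NormedField K]
    {A B N : Matrix n n K} (hBA : B * A = N) {α r : ℝ} (hB : B.DiagDominantBy α)
    (hN : ∀ i, ∑ j, ‖N i j‖ ≤ r) {μ : K} (hμ : μ ∈ spectrum K A) : ‖μ‖ * α ≤ r := by
  by_contra! hlt
  have hfactor : μ • B - N = B * (μ • 1 - A) := by rw [mul_sub, Matrix.mul_smul, mul_one, hBA]
  have hsing : (μ • B - N).det = 0 := by
    rw [spectrum.mem_iff, Matrix.isUnit_iff_isUnit_det, isUnit_iff_ne_zero, not_not,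
      Algebra.algebraMap_eq_smul_one] at hμ
    rw [hfactor, det_mul, hμ, mul_zero]
  -- `μ • B - N` is singular, yet strictly diagonally dominant when `r < ‖μ‖ * α`.
  refine det_ne_zero_of_sum_row_lt_diag (fun i => ?_) hsing
  have hNi : ∑ j ∈ Finset.univ.erase i, ‖N i j‖ + ‖N i i‖ ≤ r := by
    rw [Finset.sum_erase_add _ _ (Finset.mem_univ i)]; exact hN i
  calc ∑ j ∈ Finset.univ.erase i, ‖(μ • B - N) i j‖
      ≤ ∑ j ∈ Finset.univ.erase i, (‖μ‖ * ‖B i j‖ + ‖N i j‖) :=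
        Finset.sum_le_sum fun j _ => by
          rw [sub_apply, smul_apply, smul_eq_mul, ← norm_mul]; exact norm_sub_le _ _
    _ = ‖μ‖ * ∑ j ∈ Finset.univ.erase i, ‖B i j‖ + ∑ j ∈ Finset.univ.erase i, ‖N i j‖ := by
        rw [Finset.sum_add_distrib, Finset.mul_sum]
    _ < ‖μ‖ * (∑ j ∈ Finset.univ.erase i, ‖B i j‖ + α) - ‖N i i‖ := by linarith
    _ ≤ ‖μ‖ * ‖B i i‖ - ‖N i i‖ := by gcongr; exact hB i
    _ ≤ ‖(μ • B - N) i i‖ := by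
        rw [sub_apply, smul_apply, smul_eq_mul, ← norm_mul]; exact norm_sub_norm_le _ _

theorem DiagDominantBy.map_ofReal {B : Matrix n n ℝ} {α : ℝ} (hB : B.DiagDominantBy α) :
    (B.map Complex.ofReal).DiagDominantBy α := by
  simpa only [DiagDominantBy, map_apply, Complex.norm_real] using hB

theorem DiagDominantBy.det_ne_zero {K : Type*} [NormedField K] {B : Matrix n n K} {α : ℝ}
    (hB : B.DiagDominantBy α) (hα : 0 < α) : B.det ≠ 0 :=
  det_ne_zero_of_sum_row_lt_diag fun i => by linarith [hB i]

theorem diagDominantBy_smul_one_sub_smul {M : Matrix n n ℝ}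
    (hoff : ∀ i j, i ≠ j → 0 ≤ M i j) (hrow : ∀ i, ∑ j, M i j ≤ 0) (α : ℝ) {c : ℝ}
    (hc : 0 ≤ c) : (α • 1 - c • M).DiagDominantBy α := by
  intro i
  have hoffB : ∀ j ∈ Finset.univ.erase i, ‖(α • 1 - c • M) i j‖ = c * M i j := fun j hj => by
    rw [sub_apply, smul_apply, smul_apply, one_apply_ne (Finset.ne_of_mem_erase hj).symm,
      smul_eq_mul, smul_eq_mul, mul_zero, zero_sub, norm_neg, Real.norm_eq_abs, abs_of_nonneg
      (mul_nonneg hc (hoff i j (Finset.ne_of_mem_erase hj).symm))]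
  have hrow' : ∑ j ∈ Finset.univ.erase i, M i j ≤ - M i i := by
    linarith [hrow i, Finset.sum_erase_add _ (fun j => M i j) (Finset.mem_univ i)]
  rw [Finset.sum_congr rfl hoffB, ← Finset.mul_sum]
  calc c * ∑ j ∈ Finset.univ.erase i, M i j + α ≤ α - c * M i i := by
        linarith [mul_le_mul_of_nonneg_left hrow' hc]
    _ ≤ ‖(α • 1 - c • M) i i‖ := by
      simpa [sub_apply, one_apply_eq] using le_abs_self (α - c * M i i)

end Matrix

theorem sum_abs_le_normInf {n : Type*} [Fintype n] (N : Matrix n n ℝ) (i : n) :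
    ∑ j, |N i j| ≤ normInf N :=
  le_ciSup (f := fun i => ∑ j, |N i j|) (Set.finite_range _).bddAbove i

theorem normInf_nonneg {n : Type*} [Fintype n] (N : Matrix n n ℝ) : 0 ≤ normInf N :=
  Real.iSup_nonneg fun _ => Finset.sum_nonneg fun _ _ => abs_nonneg _

section SpectralRadius

variable {n : Type*} [Fintype n] [DecidableEq n]

theorem specRad_le_of_forall_norm_le (A : Matrix n n ℝ) {ρ : ℝ} (hρ : 0 ≤ ρ)
    (h : ∀ μ ∈ spectrum ℂ (A.map Complex.ofReal), ‖μ‖ ≤ ρ) : specRad A ≤ ρ :=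
  Real.sSup_le (by rintro _ ⟨μ, hμ, rfl⟩; exact h μ hμ) hρ

theorem specRad_smul_inv_mul_lt_one {M N : Matrix n n ℝ}
    (hoff : ∀ i j, i ≠ j → 0 ≤ M i j) (hrow : ∀ i, ∑ j, M i j ≤ 0) {α c r : ℝ} (hα : 0 < α)
    (hc : 0 ≤ c) (hN : normInf N ≤ r) (hcr : c * r < α) :
    specRad (c • ((α • 1 - c • M)⁻¹ * N)) < 1 := by
  set B := α • 1 - c • M
  have hB := Matrix.diagDominantBy_smul_one_sub_smul hoff hrow α hc
  have hBA : B * (c • (B⁻¹ * N)) = c • N := by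
    rw [Matrix.mul_smul, ← mul_assoc, Matrix.mul_nonsing_inv _ (hB.det_ne_zero hα).isUnit,
      one_mul]
  have hcN : ∀ i, ∑ j, ‖(c • N).map Complex.ofReal i j‖ ≤ c * r := fun i => by
    simp only [Matrix.map_apply, Matrix.smul_apply, smul_eq_mul, Complex.norm_real,
      Real.norm_eq_abs, abs_mul, abs_of_nonneg hc, ← Finset.mul_sum]
    exact mul_le_mul_of_nonneg_left ((sum_abs_le_normInf N i).trans hN) hc
  have hr : 0 ≤ c * r := mul_nonneg hc ((normInf_nonneg N).trans hN)
  refine (specRad_le_of_forall_norm_le _ (div_nonneg hr hα.le) fun μ hμ => ?_).trans_lt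
    ((div_lt_one hα).mpr hcr)
  rw [le_div_iff₀ hα]
  exact Matrix.norm_mul_le_of_mem_spectrum_of_mul_eq
    (by rw [← hBA]; exact (Matrix.map_mul (f := Complex.ofRealHom)).symm)
    hB.map_ofReal hcN hμ

end SpectralRadius

namespace Matrix

variable {R m n : Type*} [DecidableEq m] [DecidableEq n]

theorem offDiag_nonneg_one_kronecker_add_kronecker_one [CommRing R] [PartialOrder R]
    [IsOrderedRing R] {A : Matrix n n R} {B : Matrix m m R}
    (hA : ∀ i j, i ≠ j → 0 ≤ A i j) (hB : ∀ i j, i ≠ j → 0 ≤ B i j) (i j : m × n)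
    (hij : i ≠ j) : 0 ≤ ((1 : Matrix m m R) ⊗ₖ A + B ⊗ₖ (1 : Matrix n n R)) i j := by
  rw [Matrix.add_apply, kroneckerMap_apply, kroneckerMap_apply]
  by_cases h₁ : i.1 = j.1
  · have h₂ : i.2 ≠ j.2 := fun h₂ => hij (Prod.ext h₁ h₂)
    rw [h₁, one_apply_eq, one_apply_ne h₂, one_mul, mul_zero, add_zero]
    exact hA _ _ h₂
  · simp only [one_apply_ne h₁, zero_mul, zero_add]
    exact mul_nonneg (hB _ _ h₁) (by rw [one_apply]; split_ifs <;> simp)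

theorem sum_one_kronecker_add_kronecker_one_apply [CommSemiring R] [Fintype m] [Fintype n]
    (A : Matrix n n R) (B : Matrix m m R) (i : m × n) :
    ∑ j, ((1 : Matrix m m R) ⊗ₖ A + B ⊗ₖ (1 : Matrix n n R)) i j
      = ∑ j, A i.2 j + ∑ j, B i.1 j := by
  simp [Fintype.sum_prod_type, Finset.sum_add_distrib, one_apply]

end Matrix

/- The two neighbours of node `i` in the Neumann stencil, after reflecting the ghost nodes
`-1 ↦ 1` and `m ↦ m - 2`. They are integers so that no truncated subtraction occurs; for
`m = 1` neither is a node, which matches the lone entry `-2 / Δ ^ 2`. -/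
def neumannPrev (i : ℕ) : ℤ := if i = 0 then 1 else (i : ℤ) - 1

def neumannNext (m i : ℕ) : ℤ := if i + 1 = m then (i : ℤ) - 1 else (i : ℤ) + 1

theorem neuLap_apply (m : ℕ) (Δ : ℝ) (i j : Fin m) :
    neuLap m Δ i j =
      ((if ((j : ℕ) : ℤ) = neumannPrev i then 1 else 0)
        + (if ((j : ℕ) : ℤ) = neumannNext m i then 1 else 0)
        - 2 * (if i = j then 1 else 0)) / Δ ^ 2 := by
  have hi := i.isLt
  have hj := j.isLt
  simp only [neuLap, of_apply, neumannPrev, neumannNext, Fin.ext_iff]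
  split_ifs <;> first | omega | ring1

theorem sum_ite_val_eq_le_one (m : ℕ) (k : ℤ) :
    ∑ j : Fin m, (if ((j : ℕ) : ℤ) = k then (1 : ℝ) else 0) ≤ 1 := by
  rw [Finset.sum_boole, Nat.cast_le_one]
  exact Finset.card_le_one.mpr fun a ha b hb => by
    simp only [Finset.mem_filter, Finset.mem_univ, true_and] at ha hb
    exact Fin.ext (by omega)

theorem neuLap_offDiag_nonneg (m : ℕ) (Δ : ℝ) (i j : Fin m) (hij : i ≠ j) :
    0 ≤ neuLap m Δ i j := by
  rw [neuLap_apply, if_neg hij]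
  split_ifs <;> positivity

theorem sum_neuLap_row_nonpos (m : ℕ) (Δ : ℝ) (i : Fin m) : ∑ j, neuLap m Δ i j ≤ 0 := by
  simp only [neuLap_apply, ← Finset.sum_div, Finset.sum_sub_distrib, Finset.sum_add_distrib,
    ← Finset.mul_sum, Finset.sum_ite_eq, Finset.mem_univ, if_true]
  have hprev := sum_ite_val_eq_le_one m (neumannPrev i)
  have hnext := sum_ite_val_eq_le_one m (neumannNext m i)
  exact div_nonpos_of_nonpos_of_nonneg (by linarith) (sq_nonneg Δ)

theorem kronLapN_offDiag_nonneg (mx my : ℕ) (Δx Δy : ℝ) (i j : Fin my × Fin mx)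
    (hij : i ≠ j) :
    0 ≤ kronLapN mx my Δx Δy i j :=
  offDiag_nonneg_one_kronecker_add_kronecker_one (neuLap_offDiag_nonneg mx Δx)
    (neuLap_offDiag_nonneg my Δy) i j hij

theorem sum_kronLapN_row_nonpos (mx my : ℕ) (Δx Δy : ℝ) (i : Fin my × Fin mx) :
    ∑ j, kronLapN mx my Δx Δy i j ≤ 0 := by
  rw [kronLapN, sum_one_kronecker_add_kronecker_one_apply]
  linarith [sum_neuLap_row_nonpos mx Δx i.2, sum_neuLap_row_nonpos my Δy i.1]

theorem one_div_sq_add_one_div_sq_le {Δx Δy h : ℝ} (hh : 0 < h) (hx : h ≤ Δx) (hy : h ≤ Δy) :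
    1 / Δx ^ 2 + 1 / Δy ^ 2 ≤ 2 / h ^ 2 := by
  have hx' : 1 / Δx ^ 2 ≤ 1 / h ^ 2 := by gcongr
  have hy' : 1 / Δy ^ 2 ≤ 1 / h ^ 2 := by gcongr
  linarith [show 2 / h ^ 2 = 1 / h ^ 2 + 1 / h ^ 2 by ring]

theorem mul_four_mul_lt_of_ten_mul_lt {c α h s : ℝ} (hc : 0 ≤ c) (hh : 0 < h)
    (hs : s ≤ 2 / h ^ 2) (hlt : 10 * c < α * h ^ 2) : c * (4 * s) < α := by
  calc c * (4 * s) ≤ c * (4 * (2 / h ^ 2)) := by gcongr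
    _ = 8 * c / h ^ 2 := by ring
    _ ≤ 10 * c / h ^ 2 := by gcongr; linarith
    _ < α := (div_lt_iff₀ (by positivity)).mpr hlt

theorem ten_mul_lt_of_lt_div {Δt D γ w h : ℝ} (hΔt : 0 < Δt) (hw : 0 < w) (hγ : 0 ≤ γ)
    (hcond : h ^ 2 > 10 * D / w ∨ Δt < γ * h ^ 2 / (10 * D - w * h ^ 2)) :
    10 * (Δt * D) < (γ + w * Δt) * h ^ 2 := by
  rcases hcond with hlarge | hsmall
  · have := (div_lt_iff₀ hw).mp hlarge
    nlinarith
  · have hden : 0 < 10 * D - w * h ^ 2 := by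
      by_contra! hle
      linarith [div_nonpos_of_nonneg_of_nonpos (by positivity : 0 ≤ γ * h ^ 2) hle]
    have := (lt_div_iff₀ hden).mp hsmall
    linarith

theorem stmt14_general (γ : ℝ)
    (Dφ Dc w Δt : ℝ) (hDφ : 0 < Dφ) (hDc : 0 < Dc) (hw : 0 < w) (hΔt : 0 < Δt)
    (mx my : ℕ)
    (Δx Δy : ℝ) (hΔx : 0 < Δx) (hΔy : 0 < Δy)
    (h s : ℝ) (hh : h = min Δx Δy) (hs : s = 1 / Δx ^ 2 + 1 / Δy ^ 2)
    (MN N : Matrix (Fin my × Fin mx) (Fin my × Fin mx) ℝ)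
    (hMN : MN = kronLapN mx my Δx Δy)
    (hNinf : normInf N ≤ 4 * s)
    (hcond1 : h ^ 2 > 10 * Dφ / w ∨ Δt < γ * h ^ 2 / (10 * Dφ - w * h ^ 2))
    (hcond2 : Δt < γ * h ^ 2 / (10 * Dc)) :
    specRad ((Δt * Dφ) • (((γ + w * Δt) • 1 - (Δt * Dφ) • MN)⁻¹ * N)) < 1 ∧
      specRad ((Δt * Dc) • ((γ • 1 - (Δt * Dc) • MN)⁻¹ * N)) < 1 := by
  subst hMN
  have hhpos : 0 < h := hh ▸ lt_min hΔx hΔy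
  have hs2 : s ≤ 2 / h ^ 2 :=
    hs ▸ one_div_sq_add_one_div_sq_le hhpos (hh ▸ min_le_left _ _) (hh ▸ min_le_right _ _)
  have hc : 10 * (Δt * Dc) < γ * h ^ 2 := by
    have := (lt_div_iff₀ (by positivity)).mp hcond2
    linarith
  have hγ : 0 < γ := pos_of_mul_pos_left ((by positivity : 0 < 10 * (Δt * Dc)).trans hc)
    (sq_nonneg h)
  have hφ := ten_mul_lt_of_lt_div hΔt hw hγ.le hcond1
  exact ⟨specRad_smul_inv_mul_lt_one (kronLapN_offDiag_nonneg mx my Δx Δy)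
      (sum_kronLapN_row_nonpos mx my Δx Δy) (by positivity) (by positivity) hNinf
      (mul_four_mul_lt_of_ten_mul_lt (by positivity) hhpos hs2 hφ),
    specRad_smul_inv_mul_lt_one (kronLapN_offDiag_nonneg mx my Δx Δy)
      (sum_kronLapN_row_nonpos mx my Δx Δy) hγ (by positivity) hNinf
      (mul_four_mul_lt_of_ten_mul_lt (by positivity) hhpos hs2 hc)⟩

theorem stmt14 (γ : ℝ) (hγ : γ = 1 ∨ γ = 3 / 2)
    (Dφ Dc w Δt : ℝ) (hDφ : 0 < Dφ) (hDc : 0 < Dc) (hw : 0 < w) (hΔt : 0 < Δt)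
    (mx my : ℕ) (hmx : 2 ≤ mx) (hmy : 2 ≤ my)
    (Δx Δy : ℝ) (hΔx : 0 < Δx) (hΔy : 0 < Δy)
    (h s : ℝ) (hh : h = min Δx Δy) (hs : s = 1 / Δx ^ 2 + 1 / Δy ^ 2)
    (MN N : Matrix (Fin my × Fin mx) (Fin my × Fin mx) ℝ)
    (hMN : MN = kronLapN mx my Δx Δy)
    (hN1 : norm1 N ≤ 4 * s)
    (hNinf : normInf N ≤ 4 * s)
    (hA1 : Δt * Dφ * s < γ + w * Δt)
    (hA2 : Δt * Dc * s < γ)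
    (hcond1 : h ^ 2 > 10 * Dφ / w ∨ Δt < γ * h ^ 2 / (10 * Dφ - w * h ^ 2))
    (hcond2 : Δt < γ * h ^ 2 / (10 * Dc)) :
    specRad ((Δt * Dφ) • (((γ + w * Δt) • 1 - (Δt * Dφ) • MN)⁻¹ * N)) < 1 ∧
      specRad ((Δt * Dc) • ((γ • 1 - (Δt * Dc) • MN)⁻¹ * N)) < 1 :=
  stmt14_general γ Dφ Dc w Δt hDφ hDc hw hΔt mx my Δx Δy hΔx hΔy h s hh hs MN N hMN hNinf hcond1
    hcond2
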